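/- Elliptical potential lemma (sliding-window version): for actions A_1,…,A_T ∈ ℝ^d with ‖A_t‖₂ ≤ L, and V_{t-1} = Σ_{s=max(1,t-τ)}^{t-1} A_s A_s^⊤ + (λ/c_μ) I_d, it holds that Σ_{t=1}^T min{1, ‖A_t‖²_{V_{t-1}^{-1}}} ≤ 2 d ⌈T/τ⌉ log(1 + c_μ L² τ/(λ d)). -/

import Mathlib

/-!
Cut the rounds `1, …, T` into `⌈T/τ⌉` blocks of `τ` consecutive rounds. Inside a block starting
at `b`, the window of `V_{t-1}` contains every earlier action of the block, so `V_{t-1}` dominates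
(in the Loewner order) the block's own Gram matrix `G_i = Σ_{j<i} a_j a_jᵀ + (λ/c_μ) I`, and the
potential only grows when `V_{t-1}` is replaced by `G_i`. The classical elliptical potential
argument then bounds one block: `min 1 x ≤ 2 log (1 + x)`, the matrix determinant lemma makes
`Σ log (1 + ‖a_i‖²_{G_i⁻¹})` telescope to `log det G_τ - log det G_0`, and AM–GM on the eigenvalues
gives `log det G_τ ≤ d log (tr G_τ / d) ≤ d log (λ/c_μ + τ L² / d)`.
-/

open Real Matrix

open scoped MatrixOrder

lemma Finset.sum_range_mul_eq_sum_sum {M : Type*} [AddCommMonoid M] (g : ℕ → M) (m τ : ℕ) :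
    ∑ k ∈ range (m * τ), g k = ∑ j ∈ range m, ∑ i ∈ range τ, g (j * τ + i) := by
  induction m with
  | zero => simp
  | succ m ih => rw [Nat.succ_mul, sum_range_add, ih, sum_range_succ]

lemma sum_range_le_ceil_div_mul {g : ℕ → ℝ} {τ : ℕ} {C : ℝ} (hτ : 0 < τ) (hg : ∀ k, 0 ≤ g k)
    (hblock : ∀ j, ∑ i ∈ Finset.range τ, g (j * τ + i) ≤ C) (T : ℕ) :
    ∑ k ∈ Finset.range T, g k ≤ ⌈(T : ℝ) / τ⌉₊ * C := by
  set m := ⌈(T : ℝ) / τ⌉₊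
  have hT : T ≤ m * τ := by
    have := Nat.le_ceil ((T : ℝ) / τ)
    rw [div_le_iff₀ (by exact_mod_cast hτ)] at this
    exact_mod_cast this
  calc ∑ k ∈ Finset.range T, g k ≤ ∑ k ∈ Finset.range (m * τ), g k :=
        Finset.sum_le_sum_of_subset_of_nonneg (Finset.range_mono hT) fun k _ _ => hg k
    _ = ∑ j ∈ Finset.range m, ∑ i ∈ Finset.range τ, g (j * τ + i) :=
        Finset.sum_range_mul_eq_sum_sum g m τ
    _ ≤ m * C := by simpa using Finset.sum_le_sum fun j (_ : j ∈ Finset.range m) => hblock j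

lemma min_one_le_two_mul_log_one_add {x : ℝ} (hx : 0 ≤ x) : min 1 x ≤ 2 * log (1 + x) := by
  rcases le_total x 1 with h | h
  · have hlog : 1 - (1 + x)⁻¹ ≤ log (1 + x) := one_sub_inv_le_log_of_pos (by linarith)
    have : x / 2 ≤ 1 - (1 + x)⁻¹ := by
      field_simp
      nlinarith
    rw [min_eq_right h]; linarith
  · have : log 2 ≤ log (1 + x) := log_le_log (by norm_num) (by linarith)
    rw [min_eq_left h]; linarith [log_two_gt_d9]

lemma Real.sum_log_le_card_mul_log_mean {ι : Type*} (s : Finset ι) {x : ι → ℝ}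
    (hx : ∀ i ∈ s, 0 < x i) : ∑ i ∈ s, log (x i) ≤ s.card * log ((∑ i ∈ s, x i) / s.card) := by
  rcases s.eq_empty_or_nonempty with rfl | hs
  · simp
  have hcard : (0 : ℝ) < s.card := by exact_mod_cast hs.card_pos
  have := strictConcaveOn_log_Ioi.concaveOn.le_map_sum (t := s) (w := fun _ => (s.card : ℝ)⁻¹)
    (p := x) (fun _ _ => by positivity) (by simp [hcard.ne']) (fun i hi => hx i hi)
  simp only [smul_eq_mul] at this
  rwa [← Finset.mul_sum, ← Finset.mul_sum, inv_mul_eq_div, inv_mul_eq_div,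
    div_le_iff₀' hcard] at this

namespace Matrix

variable {n : Type*} [Fintype n] [DecidableEq n]

lemma det_add_vecMulVec {W : Matrix n n ℝ} (hW : IsUnit W.det) (u v : n → ℝ) :
    (W + vecMulVec u v).det = W.det * (1 + v ⬝ᵥ W⁻¹ *ᵥ u) := by
  rw [vecMulVec_eq Unit, det_add_replicateCol_mul_replicateRow hW,
    det_unique (1 + replicateRow Unit v * W⁻¹ * replicateCol Unit u), Matrix.mul_assoc,
    ← replicateCol_mulVec]
  simp [replicateRow_mul_replicateCol_apply]

lemma PosDef.dotProduct_inv_mulVec_le {W V : Matrix n n ℝ} (hW : W.PosDef) (hWV : W ≤ V)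
    (x : n → ℝ) : x ⬝ᵥ V⁻¹ *ᵥ x ≤ x ⬝ᵥ W⁻¹ *ᵥ x := by
  -- With `y = V⁻¹ x`, `w = W⁻¹ x`: `0 ≤ (y - w)ᵀ W (y - w) ≤ yᵀ V y - 2 yᵀ x + wᵀ x = wᵀ x - yᵀ x`.
  have hV : V.PosDef := by simpa using hW.add_posSemidef (le_iff.mp hWV)
  set y := V⁻¹ *ᵥ x
  set w := W⁻¹ *ᵥ x
  have hVy : V *ᵥ y = x := by simp [y, mulVec_mulVec, mul_nonsing_inv _ hV.det_pos.ne'.isUnit]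
  have hWw : W *ᵥ w = x := by simp [w, mulVec_mulVec, mul_nonsing_inv _ hW.det_pos.ne'.isUnit]
  have hWsymm : w ⬝ᵥ W *ᵥ y = x ⬝ᵥ y := by
    rw [dotProduct_mulVec, ← mulVec_transpose, ← conjTranspose_eq_transpose_of_trivial,
      hW.isHermitian.eq, hWw]
  have hsq : 0 ≤ (y - w) ⬝ᵥ W *ᵥ (y - w) := by
    simpa using hW.posSemidef.dotProduct_mulVec_nonneg (y - w)
  have hVW : 0 ≤ y ⬝ᵥ (V - W) *ᵥ y := by
    simpa using (le_iff.mp hWV).dotProduct_mulVec_nonneg y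
  rw [mulVec_sub, hWw, sub_dotProduct, dotProduct_sub, dotProduct_sub, hWsymm] at hsq
  rw [sub_mulVec, dotProduct_sub, hVy] at hVW
  linarith [dotProduct_comm x y, dotProduct_comm x w]

lemma PosDef.dotProduct_inv_mulVec_nonneg {M : Matrix n n ℝ} (hM : M.PosDef) (x : n → ℝ) :
    0 ≤ x ⬝ᵥ M⁻¹ *ᵥ x := by
  simpa using hM.inv.posSemidef.dotProduct_mulVec_nonneg x

lemma PosDef.log_det_le_card_mul_log_trace_div {M : Matrix n n ℝ} (hM : M.PosDef) :
    log M.det ≤ Fintype.card n * log (M.trace / Fintype.card n) := by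
  have := Real.sum_log_le_card_mul_log_mean Finset.univ (fun i _ => hM.eigenvalues_pos i)
  rw [hM.isHermitian.det_eq_prod_eigenvalues, hM.isHermitian.trace_eq_sum_eigenvalues]
  simpa [log_prod fun i _ => (hM.eigenvalues_pos i).ne'] using this

lemma posDef_sum_vecMulVec_add_smul_one {ι : Type*} (s : Finset ι) (a : ι → n → ℝ)
    {c : ℝ} (hc : 0 < c) : (∑ i ∈ s, vecMulVec (a i) (a i) + c • 1).PosDef :=
  PosDef.posSemidef_add
    (posSemidef_sum s fun i _ => by simpa using posSemidef_vecMulVec_self_star (a i))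
    (PosDef.one.smul hc)

end Matrix

section Gram

variable {n : Type*} [DecidableEq n]

def regularizedGram (c : ℝ) (a : ℕ → n → ℝ) (k : ℕ) : Matrix n n ℝ :=
  ∑ i ∈ Finset.range k, vecMulVec (a i) (a i) + c • 1

variable {c : ℝ} {a : ℕ → n → ℝ}

lemma regularizedGram_succ (k : ℕ) :
    regularizedGram c a (k + 1) = regularizedGram c a k + vecMulVec (a k) (a k) := by
  simp only [regularizedGram, Finset.sum_range_succ, add_right_comm]

variable [Fintype n]

lemma posDef_regularizedGram (hc : 0 < c) (k : ℕ) : (regularizedGram c a k).PosDef :=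
  posDef_sum_vecMulVec_add_smul_one _ a hc

lemma trace_regularizedGram (k : ℕ) :
    (regularizedGram c a k).trace = ∑ i ∈ Finset.range k, a i ⬝ᵥ a i + c * Fintype.card n := by
  simp [regularizedGram, trace_sum, trace_vecMulVec]

lemma log_det_regularizedGram_zero :
    log (regularizedGram c a 0).det = Fintype.card n * log c := by
  simp [regularizedGram, log_pow]

lemma sum_log_one_add_eq_log_det_sub (hc : 0 < c) (k : ℕ) :
    ∑ i ∈ Finset.range k, log (1 + a i ⬝ᵥ (regularizedGram c a i)⁻¹ *ᵥ a i)
      = log (regularizedGram c a k).det - log (regularizedGram c a 0).det := by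
  rw [← Finset.sum_range_sub fun i => log (regularizedGram c a i).det]
  refine Finset.sum_congr rfl fun i _ => ?_
  have hG := posDef_regularizedGram (a := a) hc i
  have hq := hG.dotProduct_inv_mulVec_nonneg (a i)
  rw [regularizedGram_succ, det_add_vecMulVec hG.det_pos.ne'.isUnit,
    log_mul hG.det_pos.ne' (by positivity)]
  ring

lemma log_det_regularizedGram_sub_le (hc : 0 < c) {L : ℝ} (ha : ∀ i, a i ⬝ᵥ a i ≤ L ^ 2)
    (k : ℕ) : log (regularizedGram c a k).det - log (regularizedGram c a 0).det
      ≤ Fintype.card n * log (1 + k * L ^ 2 / (c * Fintype.card n)) := by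
  rcases (Fintype.card n).eq_zero_or_pos with hn | hn
  · have := Fintype.card_eq_zero_iff.mp hn
    simp
  have := Fintype.card_pos_iff.mp hn
  set d := (Fintype.card n : ℝ)
  have hd : 0 < d := Nat.cast_pos.mpr hn
  have hG := posDef_regularizedGram (a := a) hc k
  have htrace : (regularizedGram c a k).trace ≤ c * d + k * L ^ 2 := by
    rw [trace_regularizedGram]
    have := Finset.sum_le_sum fun i (_ : i ∈ Finset.range k) => ha i
    simp only [Finset.sum_const, Finset.card_range, nsmul_eq_mul] at this
    linarith
  rw [log_det_regularizedGram_zero]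
  calc log (regularizedGram c a k).det - d * log c
      ≤ d * log ((regularizedGram c a k).trace / d) - d * log c := by
        gcongr; exact hG.log_det_le_card_mul_log_trace_div
    _ = d * log ((regularizedGram c a k).trace / (c * d)) := by
        rw [← mul_sub, ← log_div (div_pos hG.trace_pos hd).ne' hc.ne', div_div, mul_comm d c]
    _ ≤ d * log (1 + k * L ^ 2 / (c * d)) := by
        gcongr
        · exact div_pos hG.trace_pos (by positivity)
        · rw [div_le_iff₀ (by positivity), add_mul, one_mul, div_mul_cancel₀ _ (by positivity)]
          linarith

/-- The paper's `V_u`: its window holds the last (at most) `τ` actions up to time `u`. -/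
def slidingGram (c : ℝ) (τ : ℕ) (A : ℕ → n → ℝ) (u : ℕ) : Matrix n n ℝ :=
  ∑ s ∈ Finset.Icc (max 1 (u + 1 - τ)) u, vecMulVec (A s) (A s) + c • 1

variable {τ : ℕ} {A : ℕ → n → ℝ}

lemma posDef_slidingGram (hc : 0 < c) (u : ℕ) : (slidingGram c τ A u).PosDef :=
  posDef_sum_vecMulVec_add_smul_one _ A hc

lemma regularizedGram_le_slidingGram {b i : ℕ} (hb : 1 ≤ b) (hi : i < τ) :
    regularizedGram c (fun j => A (b + j)) i ≤ slidingGram c τ A (b + i - 1) := by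
  unfold regularizedGram slidingGram
  gcongr ?_ + _
  calc ∑ j ∈ Finset.range i, vecMulVec (A (b + j)) (A (b + j))
      = ∑ s ∈ Finset.Ico b (b + i), vecMulVec (A s) (A s) := by
        rw [Finset.sum_Ico_eq_sum_range, Nat.add_sub_cancel_left]
    _ ≤ _ := by
        refine Finset.sum_le_sum_of_subset_of_nonneg (fun s => ?_) fun s _ _ => ?_
        · simp only [Finset.mem_Ico, Finset.mem_Icc]
          omega
        · simpa [nonneg_iff_posSemidef] using posSemidef_vecMulVec_self_star (A s)

lemma sum_min_one_slidingGram_le (hc : 0 < c) {L : ℝ} (hA : ∀ t, A t ⬝ᵥ A t ≤ L ^ 2) {b : ℕ}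
    (hb : 1 ≤ b) :
    ∑ i ∈ Finset.range τ, min 1 (A (b + i) ⬝ᵥ (slidingGram c τ A (b + i - 1))⁻¹ *ᵥ A (b + i))
      ≤ 2 * Fintype.card n * log (1 + τ * L ^ 2 / (c * Fintype.card n)) := by
  set a := fun j => A (b + j)
  calc _ ≤ ∑ i ∈ Finset.range τ, 2 * log (1 + a i ⬝ᵥ (regularizedGram c a i)⁻¹ *ᵥ a i) := by
        refine Finset.sum_le_sum fun i hi => ?_
        have hx := PosDef.dotProduct_inv_mulVec_nonneg
          (posDef_slidingGram (τ := τ) (A := A) hc (b + i - 1)) (A (b + i))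
        have hle := (posDef_regularizedGram (a := a) hc i).dotProduct_inv_mulVec_le
          (regularizedGram_le_slidingGram hb (Finset.mem_range.mp hi)) (A (b + i))
        calc _ ≤ 2 * log (1 + A (b + i) ⬝ᵥ (slidingGram c τ A (b + i - 1))⁻¹ *ᵥ A (b + i)) :=
              min_one_le_two_mul_log_one_add hx
          _ ≤ _ := by gcongr
    _ = 2 * (log (regularizedGram c a τ).det - log (regularizedGram c a 0).det) := by
        rw [← Finset.mul_sum, sum_log_one_add_eq_log_det_sub hc]
    _ ≤ _ := by
        have := log_det_regularizedGram_sub_le hc (fun j => hA (b + j)) τ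
        linarith

end Gram

theorem elliptical_potential_sliding_window_general
    (d T τ : ℕ) (hτ : 1 ≤ τ) (A : ℕ → (Fin d → ℝ))
    (lam cμ L : ℝ) (hlam : 0 < lam) (hcμ : 0 < cμ)
    (hA : ∀ t, Real.sqrt (A t ⬝ᵥ A t) ≤ L)
    (V : ℕ → Matrix (Fin d) (Fin d) ℝ)
    (hV : ∀ u, V u = (∑ s ∈ Finset.Icc (max 1 (u + 1 - τ)) u, vecMulVec (A s) (A s))
      + (lam / cμ) • (1 : Matrix (Fin d) (Fin d) ℝ)) :
    ∑ t ∈ Finset.Icc 1 T, min 1 (A t ⬝ᵥ (V (t - 1))⁻¹.mulVec (A t))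
      ≤ 2 * d * (⌈(T : ℝ) / (τ : ℝ)⌉₊ : ℝ)
        * Real.log (1 + cμ * L ^ 2 * τ / (lam * d)) := by
  obtain rfl : V = slidingGram (lam / cμ) τ A := funext hV
  have hc : 0 < lam / cμ := div_pos hlam hcμ
  have hAL : ∀ t, A t ⬝ᵥ A t ≤ L ^ 2 := fun t => (sqrt_le_iff.mp (hA t)).2
  rw [← Finset.Ico_add_one_right_eq_Icc, Finset.sum_Ico_eq_sum_range, Nat.add_sub_cancel]
  calc _ ≤ ⌈(T : ℝ) / τ⌉₊ * (2 * d * log (1 + τ * L ^ 2 / (lam / cμ * d))) := by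
        refine sum_range_le_ceil_div_mul hτ (fun k => ?_) (fun j => ?_) T
        · exact le_min zero_le_one ((posDef_slidingGram hc _).dotProduct_inv_mulVec_nonneg _)
        · simpa only [add_assoc, Fintype.card_fin] using
            sum_min_one_slidingGram_le hc hAL (b := 1 + j * τ) (by omega)
    _ = _ := by
        rw [show (τ : ℝ) * L ^ 2 / (lam / cμ * d) = cμ * L ^ 2 * τ / (lam * d) by
          rw [div_mul_eq_mul_div, div_div_eq_mul_div]; ring]
        ring

/-- Elliptical potential lemma, sliding-window version. -/
theorem elliptical_potential_sliding_window
    (d T τ : ℕ) (hd : 0 < d) (hτ : 1 ≤ τ) (A : ℕ → (Fin d → ℝ))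
    (lam cμ L : ℝ) (hlam : 0 < lam) (hcμ : 0 < cμ) (hL : 0 < L)
    (hA : ∀ t, Real.sqrt (A t ⬝ᵥ A t) ≤ L)
    (V : ℕ → Matrix (Fin d) (Fin d) ℝ)
    (hV : ∀ u, V u = (∑ s ∈ Finset.Icc (max 1 (u + 1 - τ)) u, vecMulVec (A s) (A s))
      + (lam / cμ) • (1 : Matrix (Fin d) (Fin d) ℝ)) :
    ∑ t ∈ Finset.Icc 1 T, min 1 (A t ⬝ᵥ (V (t - 1))⁻¹.mulVec (A t))
      ≤ 2 * d * (⌈(T : ℝ) / (τ : ℝ)⌉₊ : ℝ)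
        * Real.log (1 + cμ * L ^ 2 * τ / (lam * d)) :=
  elliptical_potential_sliding_window_general d T τ hτ A lam cμ L hlam hcμ hA V hV
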